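/- arXiv:math/0101263 — 2 statements merged into one kernel-verified Lean document; each statement's English description precedes it below -/
import Mathlib

section
/- Fix 1/2 < s < 1 and N ≥ 1, and let m be as given. For n = 4 and n = 6 there is a constant C depending only on s (in particular independent of N) such that for all real ξ₁, …, ξₙ with ξ₁ + ⋯ + ξₙ = 0: m(ξₙ)(1+|ξₙ|)^{1−s} ≤ C ∏_{j=1}^{n−1} m(ξⱼ)(1+|ξⱼ|)^{1−s}. -/
open MeasureTheory Complex Real Set

noncomputable section

/-- `m` is the symbol of the `I`-operator at level `N` and regularity `s`. -/
def IsIMultiplier (s N : ℝ) (m : ℝ → ℝ) : Prop :=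
  ContDiff ℝ (⊤ : ℕ∞) m ∧
  (∀ ξ, m (-ξ) = m ξ) ∧
  (∀ ξ, 0 ≤ m ξ ∧ m ξ ≤ 1) ∧
  (∀ ξ η, |ξ| ≤ |η| → m η ≤ m ξ) ∧
  (∀ ξ, |ξ| ≤ N → m ξ = 1) ∧
  (∀ ξ, 2 * N ≤ |ξ| → m ξ = (|ξ| / N) ^ (s - 1))

lemma min_subadd {x y b : ℝ} (hx : 0 ≤ x) (hy : 0 ≤ y) (hb : 0 ≤ b) :
    min (x + y) b ≤ min x b + min y b := by
  rcases le_total x b with h|h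
  · rcases le_total y b with h'|h'
    · calc min (x+y) b ≤ x + y := min_le_left _ _
        _ = min x b + min y b := by rw [min_eq_left h, min_eq_left h']
    · have h1 : min (x+y) b ≤ b := min_le_right _ _
      have h0 : (0:ℝ) ≤ min x b := le_min hx hb
      rw [min_eq_right h']; linarith
  · have h0 : (0:ℝ) ≤ min y b := le_min hy hb
    have h1 : min (x+y) b ≤ b := min_le_right _ _
    rw [min_eq_right h]; linarith

lemma sandwich {s N : ℝ} (hs : 1/2 < s) (hs1 : s < 1) (hN : 1 ≤ N)
    {m : ℝ → ℝ} (hm : IsIMultiplier s N m) (ξ : ℝ) :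
    (min (1+|ξ|) (1+N)) ^ (1-s) ≤ 2 * (m ξ * (1+|ξ|)^(1-s)) ∧
    m ξ * (1+|ξ|)^(1-s) ≤ 2 * (min (1+|ξ|) (1+N)) ^ (1-s) := by
  obtain ⟨-, -, hm01, hmono, hm1, hm2⟩ := hm
  have ht0 : (0:ℝ) < 1 - s := by linarith
  have ht1 : 1 - s ≤ 1 := by linarith
  have hx0 : (0:ℝ) ≤ 1 + |ξ| := by positivity
  have h2t : (2:ℝ)^(1-s) ≤ 2 := by
    calc (2:ℝ)^(1-s) ≤ (2:ℝ)^(1:ℝ) := rpow_le_rpow_of_exponent_le one_le_two ht1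
      _ = 2 := rpow_one 2
  rcases le_total |ξ| N with hA | hB
  · -- |ξ| ≤ N
    have hmin : min (1+|ξ|) (1+N) = 1+|ξ| := min_eq_left (by linarith)
    rw [hmin, hm1 ξ hA, one_mul]
    have hG : (0:ℝ) ≤ (1+|ξ|)^(1-s) := rpow_nonneg hx0 _
    constructor <;> linarith
  · have hmin : min (1+|ξ|) (1+N) = 1+N := min_eq_right (by linarith)
    rw [hmin]
    have hNpos : (0:ℝ) < N := by linarith
    have hG : (0:ℝ) < (1+N)^(1-s) := rpow_pos_of_pos (by linarith) _
    rcases le_total |ξ| (2*N) with hB2 | hC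
    · -- N ≤ |ξ| ≤ 2N
      have hm2N : m (2*N) = 2^(s-1) := by
        have habs : |2*N| = 2*N := _root_.abs_of_nonneg (by linarith)
        rw [hm2 (2*N) (le_of_eq habs.symm), habs]
        congr 1
        field_simp
      have hml : 2^(s-1) ≤ m ξ := by
        rw [← hm2N]
        exact hmono ξ (2*N) (by rw [_root_.abs_of_nonneg (by linarith : (0:ℝ) ≤ 2*N)]; exact hB2)
      have h2s1 : (1:ℝ)/2 ≤ (2:ℝ)^(s-1) := by
        have : (2:ℝ)^(s-1) = ((2:ℝ)^(1-s))⁻¹ := by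
          rw [← rpow_neg (by norm_num : (0:ℝ) ≤ 2)]; ring_nf
        rw [this, one_div]
        exact inv_anti₀ (by positivity) h2t
      constructor
      · -- (1+N)^t ≤ 2 m ξ (1+|ξ|)^t
        have h1 : (1+N)^(1-s) ≤ (1+|ξ|)^(1-s) :=
          rpow_le_rpow (by linarith) (by linarith) (le_of_lt ht0)
        have hGx : (0:ℝ) ≤ (1+|ξ|)^(1-s) := rpow_nonneg hx0 _
        calc (1+N)^(1-s) ≤ (1+|ξ|)^(1-s) := h1
          _ = 2 * ((1/2) * (1+|ξ|)^(1-s)) := by ring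
          _ ≤ 2 * (m ξ * (1+|ξ|)^(1-s)) := by
              apply mul_le_mul_of_nonneg_left _ (by norm_num)
              exact mul_le_mul_of_nonneg_right (le_trans h2s1 hml) hGx
      · have h1 : (1+|ξ|)^(1-s) ≤ (2*(1+N))^(1-s) :=
          rpow_le_rpow hx0 (by linarith) (le_of_lt ht0)
        have h2 : (2*(1+N):ℝ)^(1-s) = 2^(1-s) * (1+N)^(1-s) :=
          mul_rpow (by norm_num) (by linarith)
        calc m ξ * (1+|ξ|)^(1-s) ≤ 1 * (1+|ξ|)^(1-s) :=
              mul_le_mul_of_nonneg_right (hm01 ξ).2 (rpow_nonneg hx0 _)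
          _ = (1+|ξ|)^(1-s) := one_mul _
          _ ≤ 2^(1-s) * (1+N)^(1-s) := by rw [← h2]; exact h1
          _ ≤ 2 * (1+N)^(1-s) := mul_le_mul_of_nonneg_right h2t hG.le
    · -- 2N ≤ |ξ|
      have hxpos : (0:ℝ) < |ξ| := by linarith
      have hFeq : m ξ * (1+|ξ|)^(1-s) = (N*(1+|ξ|)/|ξ|)^(1-s) := by
        rw [hm2 ξ hC]
        have : (|ξ|/N)^(s-1) = (N/|ξ|)^(1-s) := by
          rw [show s-1 = -(1-s) by ring, rpow_neg (by positivity),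
            ← inv_rpow (by positivity), inv_div]
        rw [this, ← mul_rpow (by positivity) hx0]
        congr 1
        field_simp
      rw [hFeq]
      have hb1 : N*(1+|ξ|)/|ξ| ≤ 1+N := by
        rw [div_le_iff₀ hxpos]
        have : N ≤ |ξ| * (1/2) * 2 := by nlinarith
        nlinarith
      have hb2 : (1+N) ≤ 2 * (N*(1+|ξ|)/|ξ|) := by
        have hNle : N ≤ N*(1+|ξ|)/|ξ| := by
          rw [le_div_iff₀ hxpos]; nlinarith
        linarith
      have hBpos : (0:ℝ) ≤ N*(1+|ξ|)/|ξ| := by positivity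
      constructor
      · calc (1+N)^(1-s) ≤ (2*(N*(1+|ξ|)/|ξ|))^(1-s) :=
              rpow_le_rpow (by linarith) hb2 ht0.le
          _ = 2^(1-s) * (N*(1+|ξ|)/|ξ|)^(1-s) := mul_rpow (by norm_num) hBpos
          _ ≤ 2 * (N*(1+|ξ|)/|ξ|)^(1-s) :=
              mul_le_mul_of_nonneg_right h2t (rpow_nonneg hBpos _)
      · calc (N*(1+|ξ|)/|ξ|)^(1-s) ≤ (1+N)^(1-s) :=
              rpow_le_rpow hBpos hb1 ht0.le
          _ ≤ 2 * (1+N)^(1-s) := by linarith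

/-- Pointwise multiplier bound: for `n = 4` and `n = 6`, whenever `ξ₁ + ⋯ + ξₙ = 0` one has
`m(ξₙ)(1+|ξₙ|)^{1-s} ≤ C ∏_{j<n} m(ξⱼ)(1+|ξⱼ|)^{1-s}`, with `C` depending only on `s`
(not on `N`). -/
theorem multiplier_product_bound (s : ℝ) (hs : 1 / 2 < s) (hs1 : s < 1) :
    ∃ C : ℝ, 0 < C ∧
      ∀ N : ℝ, 1 ≤ N → ∀ m : ℝ → ℝ, IsIMultiplier s N m →
        (∀ ξ₁ ξ₂ ξ₃ ξ₄ : ℝ, ξ₁ + ξ₂ + ξ₃ + ξ₄ = 0 →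
          m ξ₄ * (1 + |ξ₄|) ^ (1 - s)
            ≤ C * (m ξ₁ * (1 + |ξ₁|) ^ (1 - s) * (m ξ₂ * (1 + |ξ₂|) ^ (1 - s))
                    * (m ξ₃ * (1 + |ξ₃|) ^ (1 - s)))) ∧
        (∀ ξ₁ ξ₂ ξ₃ ξ₄ ξ₅ ξ₆ : ℝ, ξ₁ + ξ₂ + ξ₃ + ξ₄ + ξ₅ + ξ₆ = 0 →
          m ξ₆ * (1 + |ξ₆|) ^ (1 - s)
            ≤ C * (m ξ₁ * (1 + |ξ₁|) ^ (1 - s) * (m ξ₂ * (1 + |ξ₂|) ^ (1 - s))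
                    * (m ξ₃ * (1 + |ξ₃|) ^ (1 - s)) * (m ξ₄ * (1 + |ξ₄|) ^ (1 - s))
                    * (m ξ₅ * (1 + |ξ₅|) ^ (1 - s)))) := by
  refine ⟨320, by norm_num, fun N hN m hm => ?_⟩
  have ht0 : (0:ℝ) < 1 - s := by linarith
  have ht1 : 1 - s ≤ 1 := by linarith
  have hS := fun ξ => sandwich hs hs1 hN hm ξ
  set a : ℝ → ℝ := fun ξ => min (1+|ξ|) (1+N) with ha_def
  set F : ℝ → ℝ := fun ξ => m ξ * (1+|ξ|)^(1-s) with hF_def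
  have ha1 : ∀ ξ, 1 ≤ a ξ := fun ξ => le_min (by linarith [abs_nonneg ξ]) (by linarith)
  have ha0 : ∀ ξ, 0 ≤ a ξ := fun ξ => le_trans zero_le_one (ha1 ξ)
  have hG0 : ∀ ξ, (0:ℝ) ≤ (a ξ)^(1-s) := fun ξ => rpow_nonneg (ha0 ξ) _
  have hF0 : ∀ ξ, 0 ≤ F ξ := fun ξ =>
    mul_nonneg (hm.2.2.1 ξ).1 (rpow_nonneg (by positivity) _)
  have hlow : ∀ ξ, (a ξ)^(1-s) ≤ 2 * F ξ := fun ξ => (hS ξ).1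
  have hhigh : ∀ ξ, F ξ ≤ 2 * (a ξ)^(1-s) := fun ξ => (hS ξ).2
  constructor
  · intro ξ₁ ξ₂ ξ₃ ξ₄ hsum
    have h4 : 1 + |ξ₄| ≤ (1+|ξ₁|) + (1+|ξ₂|) + (1+|ξ₃|) := by
      have : ξ₄ = -(ξ₁+ξ₂+ξ₃) := by linarith
      have h := calc |ξ₄| = |ξ₁+ξ₂+ξ₃| := by rw [this, abs_neg]
        _ ≤ |ξ₁+ξ₂| + |ξ₃| := abs_add_le _ _
        _ ≤ |ξ₁| + |ξ₂| + |ξ₃| := by have := abs_add_le ξ₁ ξ₂; linarith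
      linarith
    have ha4 : a ξ₄ ≤ a ξ₁ + a ξ₂ + a ξ₃ := by
      calc a ξ₄ ≤ min ((1+|ξ₁|)+(1+|ξ₂|)+(1+|ξ₃|)) (1+N) := min_le_min h4 le_rfl
        _ ≤ min ((1+|ξ₁|)+(1+|ξ₂|)) (1+N) + min (1+|ξ₃|) (1+N) :=
            min_subadd (by positivity) (by positivity) (by linarith)
        _ ≤ min (1+|ξ₁|) (1+N) + min (1+|ξ₂|) (1+N) + min (1+|ξ₃|) (1+N) := by
            have := min_subadd (x := 1+|ξ₁|) (y := 1+|ξ₂|) (b := 1+N)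
              (by positivity) (by positivity) (by linarith)
            linarith
        _ = a ξ₁ + a ξ₂ + a ξ₃ := rfl
    have hprod : a ξ₄ ≤ 3 * (a ξ₁ * a ξ₂ * a ξ₃) := by
      nlinarith [ha1 ξ₁, ha1 ξ₂, ha1 ξ₃, mul_nonneg (sub_nonneg.2 (ha1 ξ₁)) (sub_nonneg.2 (ha1 ξ₂)),
        mul_nonneg (sub_nonneg.2 (ha1 ξ₂)) (sub_nonneg.2 (ha1 ξ₃)),
        mul_nonneg (sub_nonneg.2 (ha1 ξ₁)) (sub_nonneg.2 (ha1 ξ₃)),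
        mul_nonneg (mul_nonneg (sub_nonneg.2 (ha1 ξ₁)) (sub_nonneg.2 (ha1 ξ₂))) (sub_nonneg.2 (ha1 ξ₃))]
    have h3t : (3:ℝ)^(1-s) ≤ 3 := by
      calc (3:ℝ)^(1-s) ≤ (3:ℝ)^(1:ℝ) := rpow_le_rpow_of_exponent_le (by norm_num) ht1
        _ = 3 := rpow_one 3
    have hG4 : (a ξ₄)^(1-s) ≤ 3 * ((a ξ₁)^(1-s) * (a ξ₂)^(1-s) * (a ξ₃)^(1-s)) := by
      calc (a ξ₄)^(1-s) ≤ (3 * (a ξ₁ * a ξ₂ * a ξ₃))^(1-s) :=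
            rpow_le_rpow (ha0 ξ₄) hprod ht0.le
        _ = 3^(1-s) * ((a ξ₁)^(1-s) * (a ξ₂)^(1-s) * (a ξ₃)^(1-s)) := by
            rw [mul_rpow (by norm_num) (by positivity),
              mul_rpow (by positivity) (ha0 ξ₃), mul_rpow (ha0 ξ₁) (ha0 ξ₂)]
        _ ≤ 3 * ((a ξ₁)^(1-s) * (a ξ₂)^(1-s) * (a ξ₃)^(1-s)) :=
            mul_le_mul_of_nonneg_right h3t (by have := hG0 ξ₁; have := hG0 ξ₂; have := hG0 ξ₃; positivity)
    have hGF : (a ξ₁)^(1-s) * (a ξ₂)^(1-s) * (a ξ₃)^(1-s)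
        ≤ (2 * F ξ₁) * (2 * F ξ₂) * (2 * F ξ₃) := by
      apply mul_le_mul (mul_le_mul (hlow ξ₁) (hlow ξ₂) (hG0 ξ₂)
        (by have := hF0 ξ₁; linarith)) (hlow ξ₃) (hG0 ξ₃)
      have := hF0 ξ₁; have := hF0 ξ₂; positivity
    have hFP : 0 ≤ F ξ₁ * F ξ₂ * F ξ₃ :=
      mul_nonneg (mul_nonneg (hF0 ξ₁) (hF0 ξ₂)) (hF0 ξ₃)
    calc F ξ₄ ≤ 2 * (a ξ₄)^(1-s) := hhigh ξ₄
      _ ≤ 2 * (3 * ((a ξ₁)^(1-s) * (a ξ₂)^(1-s) * (a ξ₃)^(1-s))) := by linarith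
      _ ≤ 2 * (3 * ((2 * F ξ₁) * (2 * F ξ₂) * (2 * F ξ₃))) := by
          apply mul_le_mul_of_nonneg_left _ (by norm_num)
          exact mul_le_mul_of_nonneg_left hGF (by norm_num)
      _ = 48 * (F ξ₁ * F ξ₂ * F ξ₃) := by ring
      _ ≤ 320 * (F ξ₁ * F ξ₂ * F ξ₃) := by linarith
  · intro ξ₁ ξ₂ ξ₃ ξ₄ ξ₅ ξ₆ hsum
    have h6 : 1 + |ξ₆| ≤ (1+|ξ₁|) + (1+|ξ₂|) + (1+|ξ₃|) + (1+|ξ₄|) + (1+|ξ₅|) := by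
      have he : ξ₆ = -(ξ₁+ξ₂+ξ₃+ξ₄+ξ₅) := by linarith
      have h := calc |ξ₆| = |ξ₁+ξ₂+ξ₃+ξ₄+ξ₅| := by rw [he, abs_neg]
        _ ≤ |ξ₁+ξ₂+ξ₃+ξ₄| + |ξ₅| := abs_add_le _ _
        _ ≤ |ξ₁+ξ₂+ξ₃| + |ξ₄| + |ξ₅| := by have := abs_add_le (ξ₁+ξ₂+ξ₃) ξ₄; linarith
        _ ≤ |ξ₁+ξ₂| + |ξ₃| + |ξ₄| + |ξ₅| := by have := abs_add_le (ξ₁+ξ₂) ξ₃; linarith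
        _ ≤ |ξ₁| + |ξ₂| + |ξ₃| + |ξ₄| + |ξ₅| := by have := abs_add_le ξ₁ ξ₂; linarith
      linarith
    have ha6 : a ξ₆ ≤ a ξ₁ + a ξ₂ + a ξ₃ + a ξ₄ + a ξ₅ := by
      have s1 := min_subadd (x := (1+|ξ₁|)+(1+|ξ₂|)+(1+|ξ₃|)+(1+|ξ₄|)) (y := 1+|ξ₅|)
        (b := 1+N) (by positivity) (by positivity) (by linarith)
      have s2 := min_subadd (x := (1+|ξ₁|)+(1+|ξ₂|)+(1+|ξ₃|)) (y := 1+|ξ₄|)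
        (b := 1+N) (by positivity) (by positivity) (by linarith)
      have s3 := min_subadd (x := (1+|ξ₁|)+(1+|ξ₂|)) (y := 1+|ξ₃|)
        (b := 1+N) (by positivity) (by positivity) (by linarith)
      have s4 := min_subadd (x := 1+|ξ₁|) (y := 1+|ξ₂|)
        (b := 1+N) (by positivity) (by positivity) (by linarith)
      have h0 : a ξ₆ ≤ min ((1+|ξ₁|)+(1+|ξ₂|)+(1+|ξ₃|)+(1+|ξ₄|)+(1+|ξ₅|)) (1+N) :=
        min_le_min h6 le_rfl
      simp only [ha_def]
      linarith
    have hprod : a ξ₆ ≤ 5 * (a ξ₁ * a ξ₂ * a ξ₃ * a ξ₄ * a ξ₅) := by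
      have hp : ∀ {x y : ℝ}, 1 ≤ x → 1 ≤ y → 1 ≤ x * y := fun hx hy => by nlinarith
      have key : ∀ x P : ℝ, 0 ≤ x → 1 ≤ P → x ≤ x * P := fun x P hx hP =>
        le_mul_of_one_le_right hx hP
      have e1 : a ξ₁ ≤ a ξ₁ * a ξ₂ * a ξ₃ * a ξ₄ * a ξ₅ := by
        calc a ξ₁ ≤ a ξ₁ * (a ξ₂ * a ξ₃ * a ξ₄ * a ξ₅) :=
              key _ _ (ha0 ξ₁) (hp (hp (hp (ha1 ξ₂) (ha1 ξ₃)) (ha1 ξ₄)) (ha1 ξ₅))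
          _ = a ξ₁ * a ξ₂ * a ξ₃ * a ξ₄ * a ξ₅ := by ring
      have e2 : a ξ₂ ≤ a ξ₁ * a ξ₂ * a ξ₃ * a ξ₄ * a ξ₅ := by
        calc a ξ₂ ≤ a ξ₂ * (a ξ₁ * a ξ₃ * a ξ₄ * a ξ₅) :=
              key _ _ (ha0 ξ₂) (hp (hp (hp (ha1 ξ₁) (ha1 ξ₃)) (ha1 ξ₄)) (ha1 ξ₅))
          _ = a ξ₁ * a ξ₂ * a ξ₃ * a ξ₄ * a ξ₅ := by ring
      have e3 : a ξ₃ ≤ a ξ₁ * a ξ₂ * a ξ₃ * a ξ₄ * a ξ₅ := by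
        calc a ξ₃ ≤ a ξ₃ * (a ξ₁ * a ξ₂ * a ξ₄ * a ξ₅) :=
              key _ _ (ha0 ξ₃) (hp (hp (hp (ha1 ξ₁) (ha1 ξ₂)) (ha1 ξ₄)) (ha1 ξ₅))
          _ = a ξ₁ * a ξ₂ * a ξ₃ * a ξ₄ * a ξ₅ := by ring
      have e4 : a ξ₄ ≤ a ξ₁ * a ξ₂ * a ξ₃ * a ξ₄ * a ξ₅ := by
        calc a ξ₄ ≤ a ξ₄ * (a ξ₁ * a ξ₂ * a ξ₃ * a ξ₅) :=
              key _ _ (ha0 ξ₄) (hp (hp (hp (ha1 ξ₁) (ha1 ξ₂)) (ha1 ξ₃)) (ha1 ξ₅))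
          _ = a ξ₁ * a ξ₂ * a ξ₃ * a ξ₄ * a ξ₅ := by ring
      have e5 : a ξ₅ ≤ a ξ₁ * a ξ₂ * a ξ₃ * a ξ₄ * a ξ₅ := by
        calc a ξ₅ ≤ a ξ₅ * (a ξ₁ * a ξ₂ * a ξ₃ * a ξ₄) :=
              key _ _ (ha0 ξ₅) (hp (hp (hp (ha1 ξ₁) (ha1 ξ₂)) (ha1 ξ₃)) (ha1 ξ₄))
          _ = a ξ₁ * a ξ₂ * a ξ₃ * a ξ₄ * a ξ₅ := by ring
      linarith
    have h5t : (5:ℝ)^(1-s) ≤ 5 := by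
      calc (5:ℝ)^(1-s) ≤ (5:ℝ)^(1:ℝ) := rpow_le_rpow_of_exponent_le (by norm_num) ht1
        _ = 5 := rpow_one 5
    have hG6 : (a ξ₆)^(1-s)
        ≤ 5 * ((a ξ₁)^(1-s) * (a ξ₂)^(1-s) * (a ξ₃)^(1-s) * (a ξ₄)^(1-s) * (a ξ₅)^(1-s)) := by
      calc (a ξ₆)^(1-s) ≤ (5 * (a ξ₁ * a ξ₂ * a ξ₃ * a ξ₄ * a ξ₅))^(1-s) :=
            rpow_le_rpow (ha0 ξ₆) hprod ht0.le
        _ = 5^(1-s) * ((a ξ₁)^(1-s) * (a ξ₂)^(1-s) * (a ξ₃)^(1-s) * (a ξ₄)^(1-s) * (a ξ₅)^(1-s)) := by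
            rw [mul_rpow (by norm_num) (by positivity),
              mul_rpow (by positivity) (ha0 ξ₅),
              mul_rpow (by positivity) (ha0 ξ₄),
              mul_rpow (by positivity) (ha0 ξ₃), mul_rpow (ha0 ξ₁) (ha0 ξ₂)]
        _ ≤ 5 * ((a ξ₁)^(1-s) * (a ξ₂)^(1-s) * (a ξ₃)^(1-s) * (a ξ₄)^(1-s) * (a ξ₅)^(1-s)) := by
            apply mul_le_mul_of_nonneg_right h5t
            have := hG0 ξ₁; have := hG0 ξ₂; have := hG0 ξ₃; have := hG0 ξ₄; have := hG0 ξ₅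
            positivity
    have hGF : (a ξ₁)^(1-s) * (a ξ₂)^(1-s) * (a ξ₃)^(1-s) * (a ξ₄)^(1-s) * (a ξ₅)^(1-s)
        ≤ (2 * F ξ₁) * (2 * F ξ₂) * (2 * F ξ₃) * (2 * F ξ₄) * (2 * F ξ₅) := by
      have h2F : ∀ ξ, (0:ℝ) ≤ 2 * F ξ := fun ξ => by have := hF0 ξ; linarith
      apply mul_le_mul _ (hlow ξ₅) (hG0 ξ₅)
        (by have := h2F ξ₁; have := h2F ξ₂; have := h2F ξ₃; have := h2F ξ₄; positivity)
      apply mul_le_mul _ (hlow ξ₄) (hG0 ξ₄)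
        (by have := h2F ξ₁; have := h2F ξ₂; have := h2F ξ₃; positivity)
      apply mul_le_mul _ (hlow ξ₃) (hG0 ξ₃)
        (by have := h2F ξ₁; have := h2F ξ₂; positivity)
      exact mul_le_mul (hlow ξ₁) (hlow ξ₂) (hG0 ξ₂) (h2F ξ₁)
    have hFP : 0 ≤ F ξ₁ * F ξ₂ * F ξ₃ * F ξ₄ * F ξ₅ := by
      have := hF0 ξ₁; have := hF0 ξ₂; have := hF0 ξ₃; have := hF0 ξ₄; have := hF0 ξ₅
      positivity
    calc F ξ₆ ≤ 2 * (a ξ₆)^(1-s) := hhigh ξ₆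
      _ ≤ 2 * (5 * ((a ξ₁)^(1-s) * (a ξ₂)^(1-s) * (a ξ₃)^(1-s) * (a ξ₄)^(1-s) * (a ξ₅)^(1-s))) := by
          linarith
      _ ≤ 2 * (5 * ((2 * F ξ₁) * (2 * F ξ₂) * (2 * F ξ₃) * (2 * F ξ₄) * (2 * F ξ₅))) := by
          apply mul_le_mul_of_nonneg_left _ (by norm_num)
          exact mul_le_mul_of_nonneg_left hGF (by norm_num)
      _ = 320 * (F ξ₁ * F ξ₂ * F ξ₃ * F ξ₄ * F ξ₅) := by ring
end
end

section
/- Fix 2/3 < s < 1, N ≥ 1, m as given, and real constants C₃, C₄, and define M₆(ξ₁,…,ξ₆) := C₃ Σ_{j=1}^6 (−1)^{j−1} mⱼ² ξⱼ² + C₄ Σ_{{a,c,e}={1,3,5}, {b,d,f}={2,4,6}} (m_a m_b m_c m_{def} ξ_{ac} ξ_e − m_{abc} m_d m_e m_f ξ_{df} ξ_b) on the hyperplane ξ₁+⋯+ξ₆ = 0. Then whenever ξ₁+⋯+ξ₆ = 0 and N_soprano ≥ N: (i) if N_tenor ≥ N_soprano/100 then |M₆| ≤ C N^{−1} (1+N_soprano)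 m(ξ_soprano) (1+N_alto) m(ξ_alto) (1+N_tenor) m(ξ_tenor), with C depending only on s, C₃, C₄; (ii) if N_tenor ≤ N_soprano/100 then for every ε with 0 < ε < 2s − 1 one has |M₆| ≤ C_ε N^{−1+ε} (1+N_soprano)^{1−ε} (1+N_soprano) m(ξ_soprano) (1+N_alto) m(ξ_alto), with C_ε depending only on s, ε, C₃, C₄. -/
open MeasureTheory Complex Real Set Finset

noncomputable section

/-- Odd indices `1,3,5` (as `0,2,4` in `Fin 6`). -/
def od6 : Fin 3 → Fin 6 := ![0, 2, 4]

/-- Even indices `2,4,6` (as `1,3,5` in `Fin 6`). -/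
def ev6 : Fin 3 → Fin 6 := ![1, 3, 5]

/-- The multiplier `M₆ = C₃ Σⱼ (-1)^{j-1} mⱼ² ξⱼ²
 + C₄ Σ_{{a,c,e}={1,3,5},{b,d,f}={2,4,6}} (m_a m_b m_c m_{def} ξ_{ac} ξ_e
   - m_{abc} m_d m_e m_f ξ_{df} ξ_b)`, where the second sum runs over all assignments,
realized as a sum over pairs of permutations of the odd and even index sets. -/
def M6 (C₃ C₄ : ℝ) (m : ℝ → ℝ) (ξ : Fin 6 → ℝ) : ℝ :=
  C₃ * ∑ j : Fin 6, (-1 : ℝ) ^ (j : ℕ) * (m (ξ j)) ^ 2 * (ξ j) ^ 2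
    + C₄ * ∑ p : Equiv.Perm (Fin 3), ∑ q : Equiv.Perm (Fin 3),
        (m (ξ (od6 (p 0))) * m (ξ (ev6 (q 0))) * m (ξ (od6 (p 1)))
            * m (ξ (ev6 (q 1)) + ξ (od6 (p 2)) + ξ (ev6 (q 2)))
            * (ξ (od6 (p 0)) + ξ (od6 (p 1))) * ξ (od6 (p 2))
          - m (ξ (od6 (p 0)) + ξ (ev6 (q 0)) + ξ (od6 (p 1))) * m (ξ (ev6 (q 1)))
            * m (ξ (od6 (p 2))) * m (ξ (ev6 (q 2)))
            * (ξ (ev6 (q 1)) + ξ (ev6 (q 2))) * ξ (ev6 (q 0)))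

lemma m_lower {s N : ℝ} {m : ℝ → ℝ} (hs : 2/3 < s) (hs1 : s < 1)
    (hm : IsIMultiplier s N m) (hN : 1 ≤ N) {Ns ξ : ℝ} (hNs : N ≤ Ns) (hξ : |ξ| ≤ Ns) :
    (Ns/N) ^ (s-1) / 2 ≤ m ξ := by
  obtain ⟨-, -, -, hmono, -, htail⟩ := hm
  have hN0 : 0 < N := lt_of_lt_of_le one_pos hN
  have hNs0 : 0 < Ns := lt_of_lt_of_le hN0 hNs
  set T := max Ns (2*N) with hT
  have hT0 : 0 < T := lt_of_lt_of_le hNs0 (le_max_left _ _)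
  have h1 : m T ≤ m ξ := hmono ξ T (by rw [abs_of_pos hT0]; exact hξ.trans (le_max_left _ _))
  have h2 : m T = (T/N) ^ (s-1) := by
    have := htail T (by rw [abs_of_pos hT0]; exact le_max_right _ _)
    rwa [abs_of_pos hT0] at this
  have hT2 : T ≤ 2*Ns := max_le (by linarith) (by linarith)
  have h3 : (2*Ns/N) ^ (s-1) ≤ (T/N) ^ (s-1) :=
    Real.rpow_le_rpow_of_nonpos (div_pos hT0 hN0) (by gcongr) (by linarith)
  have h4 : (2*Ns/N) ^ (s-1) = 2 ^ (s-1) * (Ns/N) ^ (s-1) := by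
    rw [mul_div_assoc, Real.mul_rpow (by norm_num) (div_pos hNs0 hN0).le]
  have h5 : (2:ℝ)⁻¹ ≤ 2 ^ (s-1) := by
    have := Real.rpow_le_rpow_of_exponent_le (x := 2) one_le_two (y := -1) (z := s-1) (by linarith)
    rwa [Real.rpow_neg_one] at this
  have h6 : (0:ℝ) ≤ (Ns/N) ^ (s-1) := Real.rpow_nonneg (div_pos hNs0 hN0).le _
  nlinarith

lemma term_bound {m1 m2 m3 m4 x y z A : ℝ} (h1 : |m1| ≤ 1) (h2 : |m2| ≤ 1) (h3 : |m3| ≤ 1)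
    (h4 : |m4| ≤ 1) (hx : |x| ≤ A) (hy : |y| ≤ A) (hz : |z| ≤ A) :
    |m1 * m2 * m3 * m4 * (x + y) * z| ≤ 2 * A ^ 2 := by
  have hA : 0 ≤ A := (abs_nonneg x).trans hx
  have hxy : |x + y| ≤ 2 * A := (abs_add_le x y).trans (by linarith)
  calc |m1 * m2 * m3 * m4 * (x + y) * z|
      = |m1| * |m2| * |m3| * |m4| * |x + y| * |z| := by simp [abs_mul]
    _ ≤ 1 * 1 * 1 * 1 * (2 * A) * A := by
        gcongr
    _ = 2 * A ^ 2 := by ring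

lemma M6_crude {C₃ C₄ : ℝ} {m : ℝ → ℝ} (hm : ∀ ξ, 0 ≤ m ξ ∧ m ξ ≤ 1)
    {ξ : Fin 6 → ℝ} {A : ℝ} (hξ : ∀ i, |ξ i| ≤ A) :
    |M6 C₃ C₄ m ξ| ≤ (6 * |C₃| + 144 * |C₄|) * A ^ 2 := by
  have hA : 0 ≤ A := (abs_nonneg (ξ 0)).trans (hξ 0)
  have hmab : ∀ x : ℝ, |m x| ≤ 1 := fun x =>
    abs_le.mpr ⟨by linarith [(hm x).1], (hm x).2⟩
  have hsum1 : |∑ j : Fin 6, (-1 : ℝ) ^ (j : ℕ) * (m (ξ j)) ^ 2 * (ξ j) ^ 2| ≤ 6 * A ^ 2 := by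
    refine (Finset.abs_sum_le_sum_abs _ _).trans ?_
    have hterm : ∀ j : Fin 6, |(-1 : ℝ) ^ (j : ℕ) * (m (ξ j)) ^ 2 * (ξ j) ^ 2| ≤ A ^ 2 := by
      intro j
      have he : |(-1 : ℝ) ^ (j : ℕ) * (m (ξ j)) ^ 2 * (ξ j) ^ 2|
          = |m (ξ j)| ^ 2 * |ξ j| ^ 2 := by
        simp [abs_mul, _root_.abs_pow]
      rw [he]
      have h1 := hmab (ξ j)
      have h2 := hξ j
      have h3 : |m (ξ j)| * |ξ j| ≤ 1 * A := mul_le_mul h1 h2 (abs_nonneg _) zero_le_one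
      nlinarith [abs_nonneg (m (ξ j)), abs_nonneg (ξ j),
        mul_nonneg (abs_nonneg (m (ξ j))) (abs_nonneg (ξ j))]
    calc ∑ j : Fin 6, |(-1 : ℝ) ^ (j : ℕ) * (m (ξ j)) ^ 2 * (ξ j) ^ 2|
        ≤ ∑ _j : Fin 6, A ^ 2 := Finset.sum_le_sum fun j _ => hterm j
      _ = 6 * A ^ 2 := by
          rw [Finset.sum_const, Finset.card_univ]
          norm_num
  have hsum2 : |∑ p : Equiv.Perm (Fin 3), ∑ q : Equiv.Perm (Fin 3),
        (m (ξ (od6 (p 0))) * m (ξ (ev6 (q 0))) * m (ξ (od6 (p 1)))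
            * m (ξ (ev6 (q 1)) + ξ (od6 (p 2)) + ξ (ev6 (q 2)))
            * (ξ (od6 (p 0)) + ξ (od6 (p 1))) * ξ (od6 (p 2))
          - m (ξ (od6 (p 0)) + ξ (ev6 (q 0)) + ξ (od6 (p 1))) * m (ξ (ev6 (q 1)))
            * m (ξ (od6 (p 2))) * m (ξ (ev6 (q 2)))
            * (ξ (ev6 (q 1)) + ξ (ev6 (q 2))) * ξ (ev6 (q 0)))| ≤ 144 * A ^ 2 := by
    have hterm : ∀ p q : Equiv.Perm (Fin 3),
        |m (ξ (od6 (p 0))) * m (ξ (ev6 (q 0))) * m (ξ (od6 (p 1)))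
            * m (ξ (ev6 (q 1)) + ξ (od6 (p 2)) + ξ (ev6 (q 2)))
            * (ξ (od6 (p 0)) + ξ (od6 (p 1))) * ξ (od6 (p 2))
          - m (ξ (od6 (p 0)) + ξ (ev6 (q 0)) + ξ (od6 (p 1))) * m (ξ (ev6 (q 1)))
            * m (ξ (od6 (p 2))) * m (ξ (ev6 (q 2)))
            * (ξ (ev6 (q 1)) + ξ (ev6 (q 2))) * ξ (ev6 (q 0))| ≤ 4 * A ^ 2 := by
      intro p q
      refine (abs_sub _ _).trans ?_
      have b1 := term_bound (hmab (ξ (od6 (p 0)))) (hmab (ξ (ev6 (q 0))))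
        (hmab (ξ (od6 (p 1)))) (hmab (ξ (ev6 (q 1)) + ξ (od6 (p 2)) + ξ (ev6 (q 2))))
        (hξ (od6 (p 0))) (hξ (od6 (p 1))) (hξ (od6 (p 2)))
      have b2 := term_bound (hmab (ξ (od6 (p 0)) + ξ (ev6 (q 0)) + ξ (od6 (p 1))))
        (hmab (ξ (ev6 (q 1)))) (hmab (ξ (od6 (p 2)))) (hmab (ξ (ev6 (q 2))))
        (hξ (ev6 (q 1))) (hξ (ev6 (q 2))) (hξ (ev6 (q 0)))
      linarith
    refine (Finset.abs_sum_le_sum_abs _ _).trans ?_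
    refine le_trans (Finset.sum_le_sum fun p _ =>
      (Finset.abs_sum_le_sum_abs _ _).trans (Finset.sum_le_sum fun q _ => hterm p q)) ?_
    rw [Finset.sum_const, Finset.sum_const, Finset.card_univ, Fintype.card_perm]
    norm_num [Nat.factorial]
    try linarith
  have key : ∀ S1 S2 : ℝ, |S1| ≤ 6 * A ^ 2 → |S2| ≤ 144 * A ^ 2 →
      |C₃ * S1 + C₄ * S2| ≤ (6 * |C₃| + 144 * |C₄|) * A ^ 2 := by
    intro S1 S2 h1 h2
    refine (abs_add_le _ _).trans ?_
    rw [abs_mul, abs_mul]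
    nlinarith [abs_nonneg C₃, abs_nonneg C₄, abs_nonneg S1, abs_nonneg S2]
  exact key _ _ hsum1 hsum2

/-- Pointwise bounds for `M₆` on the hyperplane `ξ₁+⋯+ξ₆ = 0`.  Here `σ` sorts the
frequencies by decreasing magnitude, so `ξ(σ 0), ξ(σ 1), ξ(σ 2)` are the soprano, alto and
tenor frequencies.  Assume `N_soprano ≥ N`.  (i) If `N_tenor ≥ N_soprano/100` then
`|M₆| ≤ C N⁻¹ (1+Ns) m(ξs) (1+Na) m(ξa) (1+Nt) m(ξt)` with `C = C(s,C₃,C₄)`;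
(ii) if `N_tenor ≤ N_soprano/100` then for `0 < ε < 2s-1`,
`|M₆| ≤ C_ε N^{ε-1} (1+Ns)^{1-ε} (1+Ns) m(ξs) (1+Na) m(ξa)` with `C_ε = C(s,ε,C₃,C₄)`. -/
theorem M6_pointwise_bounds (s C₃ C₄ : ℝ) (hs : 2 / 3 < s) (hs1 : s < 1) :
    (∃ C : ℝ, 0 < C ∧
      ∀ N : ℝ, 1 ≤ N → ∀ m : ℝ → ℝ, IsIMultiplier s N m →
        ∀ ξ : Fin 6 → ℝ, (∑ i, ξ i) = 0 →
          ∀ σ : Equiv.Perm (Fin 6), (∀ i j : Fin 6, i ≤ j → |ξ (σ j)| ≤ |ξ (σ i)|) →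
            N ≤ |ξ (σ 0)| → |ξ (σ 0)| / 100 ≤ |ξ (σ 2)| →
            |M6 C₃ C₄ m ξ|
              ≤ C * N ^ (-(1 : ℝ))
                  * ((1 + |ξ (σ 0)|) * m (ξ (σ 0)) * ((1 + |ξ (σ 1)|) * m (ξ (σ 1)))
                      * ((1 + |ξ (σ 2)|) * m (ξ (σ 2))))) ∧
    (∀ ε : ℝ, 0 < ε → ε < 2 * s - 1 →
      ∃ C : ℝ, 0 < C ∧
        ∀ N : ℝ, 1 ≤ N → ∀ m : ℝ → ℝ, IsIMultiplier s N m →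
          ∀ ξ : Fin 6 → ℝ, (∑ i, ξ i) = 0 →
            ∀ σ : Equiv.Perm (Fin 6), (∀ i j : Fin 6, i ≤ j → |ξ (σ j)| ≤ |ξ (σ i)|) →
              N ≤ |ξ (σ 0)| → |ξ (σ 2)| ≤ |ξ (σ 0)| / 100 →
              |M6 C₃ C₄ m ξ|
                ≤ C * N ^ (ε - 1) * (1 + |ξ (σ 0)|) ^ (1 - ε)
                    * ((1 + |ξ (σ 0)|) * m (ξ (σ 0)) * ((1 + |ξ (σ 1)|) * m (ξ (σ 1))))) := by
  have hKnn : (0:ℝ) ≤ 6 * |C₃| + 144 * |C₄| := by positivity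
  constructor
  · refine ⟨8000000 * (6 * |C₃| + 144 * |C₄| + 1), by positivity, ?_⟩
    intro N hN m hm ξ hsum σ hsort hNsop hten
    have hN0 : (0:ℝ) < N := lt_of_lt_of_le one_pos hN
    set K := 6 * |C₃| + 144 * |C₄| with hKdef
    set Ns := |ξ (σ 0)| with hNsdef
    have hNs0 : (0:ℝ) < Ns := lt_of_lt_of_le hN0 hNsop
    have hm0 : ∀ x, 0 ≤ m x := fun x => (hm.2.2.1 x).1
    have hall : ∀ i, |ξ i| ≤ Ns := by
      intro i
      have := hsort 0 (σ.symm i) (Fin.zero_le _)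
      rwa [Equiv.apply_symm_apply] at this
    have hcrude := M6_crude (C₃ := C₃) (C₄ := C₄) hm.2.2.1 hall
    set r := (Ns/N) ^ (s-1) with hrdef
    have hr0 : 0 < r := Real.rpow_pos_of_pos (div_pos hNs0 hN0) _
    have fac : ∀ j : Fin 6, Ns/100 ≤ |ξ (σ j)| →
        Ns * r / 200 ≤ (1 + |ξ (σ j)|) * m (ξ (σ j)) := by
      intro j hj
      have h2 : r/2 ≤ m (ξ (σ j)) := m_lower hs hs1 hm hN hNsop (hall _)
      have h1 : Ns/100 ≤ 1 + |ξ (σ j)| := by linarith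
      calc Ns * r / 200 = (Ns/100) * (r/2) := by ring
        _ ≤ (1 + |ξ (σ j)|) * m (ξ (σ j)) :=
            mul_le_mul h1 h2 (by positivity) (by positivity)
    have hF0 := fac 0 (by linarith)
    have hF1 := fac 1 (le_trans hten (hsort 1 2 (by decide)))
    have hF2 := fac 2 hten
    have hbase : (1:ℝ) ≤ Ns/N := (one_le_div hN0).mpr hNsop
    have hpow : (1:ℝ) ≤ (Ns/N) * r^3 := by
      have e1 : r^3 = (Ns/N) ^ ((s-1)*3) := by
        rw [hrdef, ← Real.rpow_natCast ((Ns/N)^(s-1)) 3, ← Real.rpow_mul (by positivity)]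
        norm_num
      have e2 : (Ns/N) * r^3 = (Ns/N) ^ (1 + (s-1)*3) := by
        rw [e1, Real.rpow_add (by positivity), Real.rpow_one]
      rw [e2]
      exact Real.one_le_rpow hbase (by linarith)
    calc |M6 C₃ C₄ m ξ| ≤ K * Ns^2 := hcrude
      _ ≤ (K+1) * (Ns^2 * ((Ns/N) * r^3)) := by
          have h1 : Ns^2 ≤ Ns^2 * ((Ns/N) * r^3) :=
            le_mul_of_one_le_right (sq_nonneg Ns) hpow
          have h2 : K * Ns^2 ≤ (K+1) * Ns^2 :=
            mul_le_mul_of_nonneg_right (by linarith) (sq_nonneg Ns)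
          calc K * Ns^2 ≤ (K+1) * Ns^2 := h2
            _ ≤ (K+1) * (Ns^2 * ((Ns/N) * r^3)) :=
                mul_le_mul_of_nonneg_left h1 (by positivity)
      _ = 8000000*(K+1) * N ^ (-(1:ℝ))
            * ((Ns*r/200) * (Ns*r/200) * (Ns*r/200)) := by
          rw [Real.rpow_neg_one]
          field_simp
          ring
      _ ≤ 8000000*(K+1) * N ^ (-(1:ℝ))
            * ((1 + |ξ (σ 0)|) * m (ξ (σ 0)) * ((1 + |ξ (σ 1)|) * m (ξ (σ 1)))
                * ((1 + |ξ (σ 2)|) * m (ξ (σ 2)))) := by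
          gcongr <;>
            first
              | positivity
              | exact mul_nonneg (by positivity) (hm0 _)
              | exact mul_nonneg (mul_nonneg (by positivity) (hm0 _))
                  (mul_nonneg (by positivity) (hm0 _))
  · intro ε hε0 hε1
    refine ⟨40000 * (6 * |C₃| + 144 * |C₄| + 1), by positivity, ?_⟩
    intro N hN m hm ξ hsum σ hsort hNsop hten
    have hN0 : (0:ℝ) < N := lt_of_lt_of_le one_pos hN
    set K := 6 * |C₃| + 144 * |C₄| with hKdef
    set Ns := |ξ (σ 0)| with hNsdef
    have hNs0 : (0:ℝ) < Ns := lt_of_lt_of_le hN0 hNsop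
    have hm0 : ∀ x, 0 ≤ m x := fun x => (hm.2.2.1 x).1
    have hall : ∀ i, |ξ i| ≤ Ns := by
      intro i
      have := hsort 0 (σ.symm i) (Fin.zero_le _)
      rwa [Equiv.apply_symm_apply] at this
    have hcrude := M6_crude (C₃ := C₃) (C₄ := C₄) hm.2.2.1 hall
    set r := (Ns/N) ^ (s-1) with hrdef
    have hr0 : 0 < r := Real.rpow_pos_of_pos (div_pos hNs0 hN0) _
    have fac : ∀ j : Fin 6, Ns/100 ≤ |ξ (σ j)| →
        Ns * r / 200 ≤ (1 + |ξ (σ j)|) * m (ξ (σ j)) := by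
      intro j hj
      have h2 : r/2 ≤ m (ξ (σ j)) := m_lower hs hs1 hm hN hNsop (hall _)
      have h1 : Ns/100 ≤ 1 + |ξ (σ j)| := by linarith
      calc Ns * r / 200 = (Ns/100) * (r/2) := by ring
        _ ≤ (1 + |ξ (σ j)|) * m (ξ (σ j)) :=
            mul_le_mul h1 h2 (by positivity) (by positivity)
    -- alto is comparable to soprano
    have hsum6 : ξ (σ 0) + ξ (σ 1) + ξ (σ 2) + ξ (σ 3) + ξ (σ 4) + ξ (σ 5) = 0 := by
      have h := Equiv.sum_comp σ ξ
      rw [hsum, Fin.sum_univ_six] at h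
      exact h
    have h3 := hsort 2 3 (by decide)
    have h4 := hsort 2 4 (by decide)
    have h5 := hsort 2 5 (by decide)
    have habs : Ns ≤ |ξ (σ 1)| + |ξ (σ 2)| + |ξ (σ 3)| + |ξ (σ 4)| + |ξ (σ 5)| := by
      have h0 : ξ (σ 0) = -(ξ (σ 1) + ξ (σ 2) + ξ (σ 3) + ξ (σ 4) + ξ (σ 5)) := by linarith
      calc Ns = |ξ (σ 1) + ξ (σ 2) + ξ (σ 3) + ξ (σ 4) + ξ (σ 5)| := by
            rw [hNsdef, h0, abs_neg]
        _ ≤ |ξ (σ 1) + ξ (σ 2) + ξ (σ 3) + ξ (σ 4)| + |ξ (σ 5)| := abs_add_le _ _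
        _ ≤ |ξ (σ 1) + ξ (σ 2) + ξ (σ 3)| + |ξ (σ 4)| + |ξ (σ 5)| := by
            linarith [abs_add_le (ξ (σ 1) + ξ (σ 2) + ξ (σ 3)) (ξ (σ 4))]
        _ ≤ |ξ (σ 1) + ξ (σ 2)| + |ξ (σ 3)| + |ξ (σ 4)| + |ξ (σ 5)| := by
            linarith [abs_add_le (ξ (σ 1) + ξ (σ 2)) (ξ (σ 3))]
        _ ≤ |ξ (σ 1)| + |ξ (σ 2)| + |ξ (σ 3)| + |ξ (σ 4)| + |ξ (σ 5)| := by
            linarith [abs_add_le (ξ (σ 1)) (ξ (σ 2))]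
    have halto : Ns/100 ≤ |ξ (σ 1)| := by linarith
    have hF0 := fac 0 (by linarith)
    have hF1 := fac 1 halto
    have hbase : (1:ℝ) ≤ Ns/N := (one_le_div hN0).mpr hNsop
    have hpow : (1:ℝ) ≤ N ^ (ε-1) * Ns ^ (1-ε) * r^2 := by
      have eA : Ns ^ (1-ε) * N ^ (ε-1) = (Ns/N) ^ (1-ε) := by
        have h1 : N ^ (ε - 1) = (N ^ (1 - ε))⁻¹ := by
          rw [← Real.rpow_neg hN0.le, show -(1-ε) = ε - 1 by ring]
        rw [h1, Real.div_rpow hNs0.le hN0.le, div_eq_mul_inv]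
      have eB : r^2 = (Ns/N) ^ ((s-1)*2) := by
        rw [hrdef, ← Real.rpow_natCast ((Ns/N)^(s-1)) 2, ← Real.rpow_mul (by positivity)]
        norm_num
      have e2 : N ^ (ε-1) * Ns ^ (1-ε) * r^2 = (Ns/N) ^ ((1-ε) + (s-1)*2) := by
        rw [Real.rpow_add (show (0:ℝ) < Ns/N by positivity) (1-ε) ((s-1)*2), ← eA, ← eB]
        ring
      rw [e2]
      exact Real.one_le_rpow hbase (by linarith)
    have hrp : Ns ^ (1-ε) ≤ (1 + Ns) ^ (1-ε) :=
      Real.rpow_le_rpow hNs0.le (by linarith) (by linarith)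
    calc |M6 C₃ C₄ m ξ| ≤ K * Ns^2 := hcrude
      _ ≤ (K+1) * (Ns^2 * (N ^ (ε-1) * Ns ^ (1-ε) * r^2)) := by
          have h1 : Ns^2 ≤ Ns^2 * (N ^ (ε-1) * Ns ^ (1-ε) * r^2) :=
            le_mul_of_one_le_right (sq_nonneg Ns) hpow
          have h2 : K * Ns^2 ≤ (K+1) * Ns^2 :=
            mul_le_mul_of_nonneg_right (by linarith) (sq_nonneg Ns)
          calc K * Ns^2 ≤ (K+1) * Ns^2 := h2
            _ ≤ (K+1) * (Ns^2 * (N ^ (ε-1) * Ns ^ (1-ε) * r^2)) :=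
                mul_le_mul_of_nonneg_left h1 (by positivity)
      _ = 40000*(K+1) * N ^ (ε-1) * Ns ^ (1-ε) * ((Ns*r/200) * (Ns*r/200)) := by
          ring
      _ ≤ 40000*(K+1) * N ^ (ε-1) * (1 + Ns) ^ (1-ε)
            * ((1 + |ξ (σ 0)|) * m (ξ (σ 0)) * ((1 + |ξ (σ 1)|) * m (ξ (σ 1)))) := by
          gcongr <;>
            first
              | positivity
              | exact mul_nonneg (by positivity) (hm0 _)
              | exact mul_nonneg (mul_nonneg (by positivity) (hm0 _))
                  (mul_nonneg (by positivity) (hm0 _))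
end
end
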